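/- arXiv:1901.02112 — 2 statements merged into one kernel-verified Lean document; each statement's English description precedes it below -/
import Mathlib

section
/- For every k ∈ N₂, the vector r^k does not lie in recc(S_k^C); that is, k ∉ J where J := {i ∈ N : r^i ∈ recc(S_k^C)}. -/
/-! Let `F` be the coordinate map with respect to `r`, a left inverse of `t ↦ ∑ t_j r^j`. If
`x̄ + t r^k = x̄ + v + μ r^k + d` is a point of `S_k^C`, every coordinate of `v` is nonnegative and
its `k`-th one is `< λ⁺_k`, while `d ∈ recc C` is a nonnegative combination of the `r^j`; comparing
coordinates off `k` forces `d ∈ ℝ₊ r^k`, and since the halfline through `r^k` leaves `C` at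
`λ⁺_k < ∞`, `r^k ∉ recc C`, so `d = 0` and `t < λ⁺_k`. As `x̄ ∈ S_k^C`, the direction `r^k` would
put `x̄ + λ⁺_k r^k` in `S_k^C`. -/

open Set Pointwise

noncomputable section

variable {n : ℕ} {ι : Type*} [Fintype ι]

/-- Recession cone of a set `A`. -/
def recc (A : Set (Fin n → ℝ)) : Set (Fin n → ℝ) :=
  {d | ∀ a ∈ A, ∀ t : ℝ, 0 ≤ t → a + t • d ∈ A}

/-- The translated simplicial cone `P^B = {x̄ + Σ_j x_j r^j : x_j ≥ 0}`. -/
def PBset (xb : Fin n → ℝ) (r : ι → Fin n → ℝ) : Set (Fin n → ℝ) :=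
  {x | ∃ c : ι → ℝ, (∀ j, 0 ≤ c j) ∧ x = xb + ∑ j, c j • r j}

/-- The recession cone of `P^B`, i.e. `{Σ_j t_j r^j : t_j ≥ 0}`. -/
def reccPBset (r : ι → Fin n → ℝ) : Set (Fin n → ℝ) :=
  {x | ∃ t : ι → ℝ, (∀ j, 0 ≤ t j) ∧ x = ∑ j, t j • r j}

/-- `λ⁻ = inf {λ ≥ 0 : x̄ + λ d ∈ C}` (`+∞` if the halfline misses `C`). -/
noncomputable def lamM (xb d : Fin n → ℝ) (C : Set (Fin n → ℝ)) : EReal :=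
  sInf ((fun l : ℝ => (l : EReal)) '' {l : ℝ | 0 ≤ l ∧ xb + l • d ∈ C})

/-- `λ⁺ = sup {λ ≥ 0 : x̄ + λ d ∈ C}` (`−∞` if the halfline misses `C`). -/
noncomputable def lamP (xb d : Fin n → ℝ) (C : Set (Fin n → ℝ)) : EReal :=
  sSup ((fun l : ℝ => (l : EReal)) '' {l : ℝ | 0 ≤ l ∧ xb + l • d ∈ C})

/-- `N₀`: indices whose halfline misses `C`. -/
def N0set (xb : Fin n → ℝ) (r : ι → Fin n → ℝ) (C : Set (Fin n → ℝ)) : Set ι :=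
  {j | ∀ l : ℝ, 0 ≤ l → xb + l • r j ∉ C}

/-- `N₁`: indices with `0 < λ⁻ < +∞` and `λ⁺ = +∞`. -/
def N1set (xb : Fin n → ℝ) (r : ι → Fin n → ℝ) (C : Set (Fin n → ℝ)) : Set ι :=
  {j | 0 < lamM xb (r j) C ∧ lamM xb (r j) C < ⊤ ∧ lamP xb (r j) C = ⊤}

/-- `N₂`: indices with `0 < λ⁻ < +∞` and `λ⁻ < λ⁺ < +∞`. -/
def N2set (xb : Fin n → ℝ) (r : ι → Fin n → ℝ) (C : Set (Fin n → ℝ)) : Set ι :=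
  {j | 0 < lamM xb (r j) C ∧ lamM xb (r j) C < ⊤ ∧
    lamM xb (r j) C < lamP xb (r j) C ∧ lamP xb (r j) C < ⊤}

/-- `S_k^C = {x̄} + conv(⋃_{j∈N₂} {λ r^j : 0 ≤ λ < λ⁺_j}) + {λ r^k : λ ≤ 0} + recc(C)`. -/
def SkCset (xb : Fin n → ℝ) (r : ι → Fin n → ℝ) (C : Set (Fin n → ℝ)) (k : ι) :
    Set (Fin n → ℝ) :=
  {xb} + convexHull ℝ (⋃ j ∈ N2set xb r C,
      {y : Fin n → ℝ | ∃ l : ℝ, 0 ≤ l ∧ (l : EReal) < lamP xb (r j) C ∧ y = l • r j})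
    + {y : Fin n → ℝ | ∃ l : ℝ, l ≤ 0 ∧ y = l • r k}
    + recc C

theorem LinearIndependent.exists_linearMap_sum_smul_eq {K V : Type*} [DivisionRing K]
    [AddCommGroup V] [Module K V] {r : ι → V} (hr : LinearIndependent K r) :
    ∃ F : V →ₗ[K] ι → K, ∀ t, F (∑ j, t j • r j) = t := by
  obtain ⟨F, hF⟩ := (Fintype.linearCombination K r).exists_leftInverse_of_injective
    (LinearMap.ker_eq_bot.mpr hr.fintypeLinearCombination_injective)
  exact ⟨F, fun t => by simpa [Fintype.linearCombination_apply] using LinearMap.congr_fun hF t⟩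

theorem map_eq_pi_single_of_map_sum_smul {K V : Type*} [Semiring K] [AddCommMonoid V]
    [Module K V] [DecidableEq ι] {r : ι → V} {F : V →ₗ[K] ι → K}
    (hF : ∀ t, F (∑ j, t j • r j) = t) (j : ι) : F (r j) = Pi.single j 1 := by
  simpa [Pi.single_apply] using hF (Pi.single j 1)

lemma smul_mem_recc {C : Set (Fin n → ℝ)} {d : Fin n → ℝ} (hd : d ∈ recc C) {s : ℝ}
    (hs : 0 ≤ s) : s • d ∈ recc C := by
  intro a ha t ht
  simpa [smul_smul] using hd a ha (t * s) (mul_nonneg ht hs)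

lemma zero_mem_recc (C : Set (Fin n → ℝ)) : (0 : Fin n → ℝ) ∈ recc C := by
  intro a ha t _
  simpa using ha

section HalfLine

variable {xb d : Fin n → ℝ} {C : Set (Fin n → ℝ)}

lemma exists_mem_of_lamM_lt_top (h : lamM xb d C < ⊤) : ∃ l : ℝ, 0 ≤ l ∧ xb + l • d ∈ C := by
  by_contra! hmiss
  have hempty : {l : ℝ | 0 ≤ l ∧ xb + l • d ∈ C} = ∅ :=
    eq_empty_of_forall_notMem fun l hl => hmiss l hl.1 hl.2
  simp [lamM, hempty] at h

lemma lamP_eq_top_of_mem_recc (hne : ∃ l : ℝ, 0 ≤ l ∧ xb + l • d ∈ C) (hd : d ∈ recc C) :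
    lamP xb d C = ⊤ := by
  obtain ⟨l, hl, hlC⟩ := hne
  refine (EReal.eq_top_iff_forall_lt _).mpr fun y => ?_
  have hmem : xb + (l + (|y| + 1)) • d ∈ C := by
    simpa [add_smul, add_assoc] using hd _ hlC (|y| + 1) (by positivity)
  calc (y : EReal) < ((l + (|y| + 1) : ℝ) : EReal) := by
        exact_mod_cast (by linarith [le_abs_self y] : y < l + (|y| + 1))
    _ ≤ lamP xb d C := le_sSup ⟨_, ⟨by positivity, hmem⟩, rfl⟩

lemma exists_lamP_eq_coe (hM0 : 0 < lamM xb d C) (hMP : lamM xb d C < lamP xb d C)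
    (hPt : lamP xb d C < ⊤) : ∃ L : ℝ, 0 < L ∧ lamP xb d C = L := by
  have hP0 : 0 < lamP xb d C := hM0.trans hMP
  exact ⟨(lamP xb d C).toReal, EReal.toReal_pos hP0 hPt.ne,
    (EReal.coe_toReal hPt.ne (ne_bot_of_gt hP0)).symm⟩

end HalfLine

section SkC

variable {xb : Fin n → ℝ} {r : ι → Fin n → ℝ} {C : Set (Fin n → ℝ)} {k : ι}

def N2segments (xb : Fin n → ℝ) (r : ι → Fin n → ℝ) (C : Set (Fin n → ℝ)) :
    Set (Fin n → ℝ) :=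
  ⋃ j ∈ N2set xb r C,
    {y : Fin n → ℝ | ∃ l : ℝ, 0 ≤ l ∧ (l : EReal) < lamP xb (r j) C ∧ y = l • r j}

omit [Fintype ι] in
lemma mem_SkCset_iff {p : Fin n → ℝ} :
    p ∈ SkCset xb r C k ↔ ∃ v ∈ convexHull ℝ (N2segments xb r C), ∃ μ : ℝ, μ ≤ 0 ∧
      ∃ d ∈ recc C, p = xb + v + μ • r k + d := by
  constructor
  · rintro ⟨_, ⟨_, ⟨_, rfl, v, hv, rfl⟩, _, ⟨μ, hμ, rfl⟩, rfl⟩, d, hd, rfl⟩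
    exact ⟨v, hv, μ, hμ, d, hd, rfl⟩
  · rintro ⟨v, hv, μ, hμ, d, hd, rfl⟩
    exact ⟨_, ⟨_, ⟨xb, rfl, v, hv, rfl⟩, _, ⟨μ, hμ, rfl⟩, rfl⟩, d, hd, rfl⟩

omit [Fintype ι] in
lemma xb_mem_SkCset (hk : k ∈ N2set xb r C) : xb ∈ SkCset xb r C k := by
  have hseg : (0 : Fin n → ℝ) ∈ N2segments xb r C :=
    mem_iUnion₂.mpr ⟨k, hk, 0, le_rfl, by simpa using hk.1.trans hk.2.2.1, by simp⟩
  exact mem_SkCset_iff.mpr ⟨0, subset_convexHull ℝ _ hseg, 0, le_rfl, 0, zero_mem_recc C,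
    by simp⟩

lemma convexHull_N2segments_subset {F : (Fin n → ℝ) →ₗ[ℝ] ι → ℝ}
    (hF : ∀ t, F (∑ j, t j • r j) = t) {L : ℝ} (hL : lamP xb (r k) C = L) (hL0 : 0 < L) :
    convexHull ℝ (N2segments xb r C) ⊆ F ⁻¹' (Ici 0 ∩ {c | c k < L}) := by
  classical
  have hconv : Convex ℝ (Ici (0 : ι → ℝ) ∩ {c | c k < L}) :=
    (convex_Ici 0).inter (convex_halfSpace_lt (f := fun c : ι → ℝ => c k)
      (LinearMap.proj (R := ℝ) k).isLinear L)
  refine convexHull_min ?_ (hconv.linear_preimage F)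
  simp only [N2segments, iUnion_subset_iff]
  rintro j - _ ⟨l, hl0, hlP, rfl⟩
  rw [mem_preimage, map_smul, map_eq_pi_single_of_map_sum_smul hF]
  refine ⟨mem_Ici.mpr <| smul_nonneg hl0 (Pi.single_nonneg.mpr zero_le_one), ?_⟩
  by_cases hjk : j = k
  · subst hjk
    rw [hL] at hlP
    simpa using hlP
  · simpa [Pi.single_apply, Ne.symm hjk] using hL0

lemma lt_of_add_smul_mem_SkCset {F : (Fin n → ℝ) →ₗ[ℝ] ι → ℝ}
    (hF : ∀ t, F (∑ j, t j • r j) = t) (hrecc : recc C ⊆ reccPBset r) (hkC : r k ∉ recc C)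
    {L : ℝ} (hL : lamP xb (r k) C = L) (hL0 : 0 < L) {t : ℝ}
    (ht : xb + t • r k ∈ SkCset xb r C k) : t < L := by
  classical
  obtain ⟨v, hv, μ, hμ, d, hd, hp⟩ := mem_SkCset_iff.mp ht
  obtain ⟨hv0, hvk⟩ : 0 ≤ F v ∧ F v k < L := convexHull_N2segments_subset hF hL hL0 hv
  obtain ⟨c, hc0, rfl⟩ := hrecc hd
  have heq : t • r k = v + μ • r k + ∑ j, c j • r j :=
    add_left_cancel (hp.trans (by abel))
  have hcoord := congrArg F heq
  rw [map_add, map_add, map_smul, map_smul, map_eq_pi_single_of_map_sum_smul hF, hF] at hcoord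
  have hc_ne : ∀ j ≠ k, c j = 0 := fun j hj => by
    have := congrFun hcoord j
    simp only [Pi.smul_apply, Pi.add_apply, Pi.single_eq_of_ne hj, smul_eq_mul, mul_zero,
      add_zero] at this
    have hvj : 0 ≤ F v j := hv0 j
    linarith [hc0 j]
  have hck : c k = 0 := by
    by_contra hne
    have hd' : ∑ j, c j • r j = c k • r k :=
      Finset.sum_eq_single k (fun j _ hj => by simp [hc_ne j hj]) (by simp)
    have := smul_mem_recc (hd' ▸ hd) (inv_nonneg.mpr (hc0 k))
    rw [smul_smul, inv_mul_cancel₀ hne, one_smul] at this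
    exact hkC this
  have := congrFun hcoord k
  simp only [Pi.smul_apply, Pi.add_apply, Pi.single_eq_same, smul_eq_mul, mul_one, hck,
    add_zero] at this
  linarith

end SkC

theorem stmt14_general (xb : Fin n → ℝ) (r : ι → Fin n → ℝ) (hr : LinearIndependent ℝ r)
    (C : Set (Fin n → ℝ)) (hrecc : recc C ⊆ reccPBset r)
    (k : ι) (hk : k ∈ N2set xb r C) :
    r k ∉ recc (SkCset xb r C k) := by
  obtain ⟨F, hF⟩ := hr.exists_linearMap_sum_smul_eq
  obtain ⟨L, hL0, hL⟩ := exists_lamP_eq_coe hk.1 hk.2.2.1 hk.2.2.2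
  have hkC : r k ∉ recc C := fun h =>
    hk.2.2.2.ne (lamP_eq_top_of_mem_recc (exists_mem_of_lamM_lt_top hk.2.1) h)
  intro hrk
  exact lt_irrefl L <| lt_of_add_smul_mem_SkCset hF hrecc hkC hL hL0 <|
    hrk xb (xb_mem_SkCset hk) L hL0.le

/-- Proposition 7. For `k ∈ N₂`, `r^k ∉ recc(S_k^C)`, i.e. `k ∉ J`
where `J = {i : r^i ∈ recc(S_k^C)}`. -/
theorem stmt14 (xb : Fin n → ℝ) (r : ι → Fin n → ℝ) (hr : LinearIndependent ℝ r)
    (C : Set (Fin n → ℝ)) (hCopen : IsOpen C) (hCconv : Convex ℝ C)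
    (hxb : xb ∉ closure C) (hrecc : recc C ⊆ reccPBset r)
    (k : ι) (hk : k ∈ N2set xb r C) :
    r k ∉ recc (SkCset xb r C k) :=
  stmt14_general xb r hr C hrecc k hk
end
end

section
/- Let S ⊆ M'. Then every point x = x̄ + Σ_{j∈N} x_j r^j of P^B ∖ S_k^C (with all x_j ≥ 0) satisfies Σ_{i∈S} x_i − Σ_{j∈N∖J} x_j/ε'_j(S) ≤ 0 (using the convention x/(+∞) := 0). -/
/-!
Since `x̄ ∈ S_k^C`, it suffices to show that `Σ_j x_j r^j` lies in the convex cone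
`K = recc(S_k^C)`, which contains every `r^i` with `i ∈ J`. If `T := Σ_{i∈S} x_i` exceeded
`Σ_{j∉J} x_j/ε'_j(S)`, we could pick `0 < b_j < ε'_j(S)` with `Σ_{j∉J} x_j/b_j < T`. Then
`u := Σ_{i∈S} x_i r^i` and `u + T b_j r^j = Σ_{i∈S} x_i (r^i + b_j r^j)` lie in `K`, and
`u + Σ_{j∉J} x_j r^j` is their combination with the nonnegative weights
`1 - Σ_j x_j/(T b_j)` and `x_j/(T b_j)`.
-/

open Set Pointwise

noncomputable section

variable {n : ℕ} {ι : Type*} [Fintype ι]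

/-- `J = {i ∈ N : r^i ∈ recc(S_k^C)}`. -/
def Jset (xb : Fin n → ℝ) (r : ι → Fin n → ℝ) (C : Set (Fin n → ℝ)) (k : ι) : Set ι :=
  {i | r i ∈ recc (SkCset xb r C k)}

/-- `γ'_{ij} = sup {γ ≥ 0 : r^i + γ r^j ∈ recc(S_k^C)}` (`+∞` if unbounded). -/
noncomputable def gam' (xb : Fin n → ℝ) (r : ι → Fin n → ℝ) (C : Set (Fin n → ℝ))
    (k i j : ι) : EReal :=
  sSup ((fun g : ℝ => (g : EReal)) ''
    {g : ℝ | 0 ≤ g ∧ r i + g • r j ∈ recc (SkCset xb r C k)})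

/-- `M' = {i ∈ J : γ'_{ij} > 0 for all j ∈ N∖J}`. -/
def M'set (xb : Fin n → ℝ) (r : ι → Fin n → ℝ) (C : Set (Fin n → ℝ)) (k : ι) : Set ι :=
  {i | i ∈ Jset xb r C k ∧ ∀ j, j ∉ Jset xb r C k → 0 < gam' xb r C k i j}

/-- `ε'_j(S) = min_{i∈S} γ'_{ij}` for `S ≠ ∅`, and `+∞` for `S = ∅` (via `sInf ∅ = ⊤`). -/
noncomputable def eps' (xb : Fin n → ℝ) (r : ι → Fin n → ℝ) (C : Set (Fin n → ℝ))
    (k : ι) (S : Finset ι) (j : ι) : EReal :=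
  sInf ((fun i => gam' xb r C k i j) '' (S : Set ι))

def reccCone (A : Set (Fin n → ℝ)) : PointedCone ℝ (Fin n → ℝ) where
  carrier := recc A
  add_mem' {d₁ d₂} h₁ h₂ a ha t ht := by
    simpa [smul_add, add_assoc] using h₂ _ (h₁ a ha t ht) t ht
  zero_mem' a ha t _ := by simpa using ha
  smul_mem' s d h a ha t ht := by
    change a + t • (s : ℝ) • d ∈ A
    rw [smul_smul]
    exact h a ha (t * s) (mul_nonneg ht s.2)

namespace PointedCone

variable {E : Type*} [AddCommGroup E] [Module ℝ E] {K : PointedCone ℝ E}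

lemma add_smul_mem_of_le {x y : E} {g g' : ℝ} (hx : x ∈ K) (hxy : x + g' • y ∈ K)
    (hg : 0 ≤ g) (hgg' : g ≤ g') : x + g • y ∈ K := by
  rcases hg.eq_or_lt with rfl | hg
  · simpa using hx
  have hg' : 0 < g' := hg.trans_le hgg'
  have key : x + g • y = (1 - g / g') • x + (g / g') • (x + g' • y) := by
    rw [smul_add, smul_smul, div_mul_cancel₀ _ hg'.ne']
    module
  rw [key]
  exact K.convex hx hxy (by rw [sub_nonneg, div_le_one hg']; exact hgg')
    (div_nonneg hg.le hg'.le) (by ring)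

lemma add_smul_mem_of_lt_sSup {x y : E} {g : ℝ} (hx : x ∈ K) (hg : 0 ≤ g)
    (hlt : (g : EReal) < sSup ((↑) '' {γ : ℝ | 0 ≤ γ ∧ x + γ • y ∈ K})) :
    x + g • y ∈ K := by
  obtain ⟨_, ⟨g', ⟨-, hg'⟩, rfl⟩, hgg'⟩ := lt_sSup_iff.mp hlt
  exact add_smul_mem_of_le hx hg' hg (EReal.coe_lt_coe_iff.mp hgg').le

lemma add_sum_smul_mem {κ : Type*} {s : Finset κ} {u : E} {d : κ → E} {a t : κ → ℝ}
    (hu : u ∈ K) (ht : ∀ j ∈ s, 0 < t j) (hut : ∀ j ∈ s, u + t j • d j ∈ K)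
    (ha : ∀ j ∈ s, 0 ≤ a j) (hsum : ∑ j ∈ s, a j / t j ≤ 1) :
    u + ∑ j ∈ s, a j • d j ∈ K := by
  have key : u + ∑ j ∈ s, a j • d j
      = (1 - ∑ j ∈ s, a j / t j) • u + ∑ j ∈ s, (a j / t j) • (u + t j • d j) := by
    have hcancel : ∑ j ∈ s, (a j / t j) • t j • d j = ∑ j ∈ s, a j • d j :=
      Finset.sum_congr rfl fun j hj => by rw [smul_smul, div_mul_cancel₀ _ (ht j hj).ne']
    rw [← hcancel]
    simp only [smul_add, Finset.sum_add_distrib, ← Finset.sum_smul]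
    module
  rw [key]
  exact K.add_mem (K.smul_mem (sub_nonneg.mpr hsum) hu)
    (K.sum_mem fun j hj => K.smul_mem (div_nonneg (ha j hj) (ht j hj).le) (hut j hj))

lemma sum_smul_mem_of_sum_div_lt {κ : Type*} [Fintype κ] {r : κ → E} {c b : κ → ℝ}
    {S N : Finset κ} (hc : ∀ j, 0 ≤ c j) (hSN : Disjoint S N) (hN : ∀ j ∉ N, r j ∈ K)
    (hb : ∀ j ∈ N, 0 < b j) (hSb : ∀ i ∈ S, ∀ j ∈ N, r i + b j • r j ∈ K)
    (hsum : ∑ j ∈ N, c j / b j < ∑ i ∈ S, c i) :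
    ∑ j, c j • r j ∈ K := by
  classical
  set T := ∑ i ∈ S, c i
  have hT : 0 < T :=
    (Finset.sum_nonneg fun j hj => div_nonneg (hc j) (hb j hj).le).trans_lt hsum
  set u := ∑ i ∈ S, c i • r i
  have hu : u ∈ K :=
    K.sum_mem fun i hi => K.smul_mem (hc i) (hN i (Finset.disjoint_left.mp hSN hi))
  have hut : ∀ j ∈ N, u + (T * b j) • r j ∈ K := by
    intro j hj
    have : u + (T * b j) • r j = ∑ i ∈ S, c i • (r i + b j • r j) := by
      simp only [u, T, smul_add, Finset.sum_add_distrib, smul_smul, Finset.sum_mul,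
        Finset.sum_smul]
    rw [this]
    exact K.sum_mem fun i hi => K.smul_mem (hc i) (hSb i hi j hj)
  have hSN_mem : u + ∑ j ∈ N, c j • r j ∈ K := by
    refine add_sum_smul_mem hu (fun j hj => mul_pos hT (hb j hj)) hut (fun j _ => hc j) ?_
    simp_rw [mul_comm T, ← div_div]
    rw [← Finset.sum_div, div_le_one hT]
    exact hsum.le
  have hrest : ∑ j ∈ (S ∪ N)ᶜ, c j • r j ∈ K :=
    K.sum_mem fun j hj => K.smul_mem (hc j)
      (hN j fun hjN => Finset.mem_compl.mp hj (Finset.mem_union_right S hjN))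
  rw [← Finset.sum_compl_add_sum (S ∪ N), Finset.sum_union hSN]
  exact K.add_mem hrest hSN_mem

end PointedCone

open Filter Topology in
/-- For `e = ⊤` the bound reads `c / b < δ`, as `(⊤ : EReal).toReal = 0`. -/
lemma EReal.exists_coe_lt_div_lt_div_toReal_add (c : ℝ) {e : EReal} (he : 0 < e) {δ : ℝ}
    (hδ : 0 < δ) : ∃ b : ℝ, 0 < b ∧ (b : EReal) < e ∧ c / b < c / e.toReal + δ := by
  induction e using EReal.rec with
  | bot => exact absurd he not_lt_bot
  | coe x =>
    have hx : 0 < x := EReal.coe_pos.mp he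
    have hcont : Tendsto (fun b => c / b) (𝓝[<] x) (𝓝 (c / x)) :=
      ((continuousAt_const.div continuousAt_id hx.ne').tendsto).mono_left nhdsWithin_le_nhds
    have hpos : ∀ᶠ b in 𝓝[<] x, 0 < b :=
      eventually_nhdsWithin_of_eventually_nhds (eventually_gt_nhds hx)
    obtain ⟨b, hb0, hbx, hb⟩ := (hpos.and (eventually_mem_nhdsWithin.and
      (hcont.eventually_lt_const (lt_add_of_pos_right _ hδ)))).exists
    exact ⟨b, hb0, EReal.coe_lt_coe_iff.mpr hbx, by simpa using hb⟩
  | top =>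
    have hlim : Tendsto (fun b => c / b) atTop (𝓝 0) :=
      tendsto_const_nhds.div_atTop tendsto_id
    obtain ⟨b, hb0, hb⟩ := ((eventually_gt_atTop 0).and (hlim.eventually_lt_const hδ)).exists
    exact ⟨b, hb0, EReal.coe_lt_top b, by simpa using hb⟩

lemma Finset.exists_coe_lt_sum_div_lt {κ : Type*} {s : Finset κ} (c : κ → ℝ)
    {e : κ → EReal} (he : ∀ j ∈ s, 0 < e j) {T : ℝ} (hT : ∑ j ∈ s, c j / (e j).toReal < T) :
    ∃ b : κ → ℝ, (∀ j ∈ s, 0 < b j ∧ (b j : EReal) < e j) ∧ ∑ j ∈ s, c j / b j < T := by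
  set δ := (T - ∑ j ∈ s, c j / (e j).toReal) / (s.card + 1)
  have hδ : 0 < δ := div_pos (sub_pos.mpr hT) (by positivity)
  have hδT : (s.card + 1) * δ = T - ∑ j ∈ s, c j / (e j).toReal := by
    simp only [δ]; field_simp
  choose! b hb using fun j hj =>
    EReal.exists_coe_lt_div_lt_div_toReal_add (c j) (he j hj) hδ
  refine ⟨b, fun j hj => ⟨(hb j hj).1, (hb j hj).2.1⟩, ?_⟩
  calc ∑ j ∈ s, c j / b j ≤ ∑ j ∈ s, (c j / (e j).toReal + δ) :=
        Finset.sum_le_sum fun j hj => (hb j hj).2.2.le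
    _ = ∑ j ∈ s, c j / (e j).toReal + s.card * δ := by
        rw [Finset.sum_add_distrib, Finset.sum_const, nsmul_eq_mul]
    _ < T := by linarith

lemma eps'_pos {κ : Type*} {xb : Fin n → ℝ} {r : κ → Fin n → ℝ} {C : Set (Fin n → ℝ)}
    {k : κ} {S : Finset κ} (hS : (S : Set κ) ⊆ M'set xb r C k) (hSne : S.Nonempty) {j : κ}
    (hj : j ∉ Jset xb r C k) : 0 < eps' xb r C k S j := by
  obtain ⟨i, hi, hmin⟩ := ((Finset.coe_nonempty.mpr hSne).image _).csInf_mem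
    (S.finite_toSet.image fun i => gam' xb r C k i j)
  rw [eps', ← hmin]
  exact (hS hi).2 j hj

lemma self_mem_SkCset {κ : Type*} {xb : Fin n → ℝ} {r : κ → Fin n → ℝ} {C : Set (Fin n → ℝ)}
    {k : κ} (hk : k ∈ N2set xb r C) : xb ∈ SkCset xb r C k := by
  have hk0 : ((0 : ℝ) : EReal) < lamP xb (r k) C := (EReal.coe_zero ▸ hk.1).trans hk.2.2.1
  have h0 : (0 : Fin n → ℝ) ∈ convexHull ℝ (⋃ j ∈ N2set xb r C,
      {y : Fin n → ℝ | ∃ l : ℝ, 0 ≤ l ∧ (l : EReal) < lamP xb (r j) C ∧ y = l • r j}) :=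
    subset_convexHull ℝ _ (mem_iUnion₂.mpr ⟨k, hk, 0, le_rfl, hk0, (zero_smul ℝ _).symm⟩)
  have h0' : (0 : Fin n → ℝ) ∈ {y : Fin n → ℝ | ∃ l : ℝ, l ≤ 0 ∧ y = l • r k} :=
    ⟨0, le_rfl, (zero_smul ℝ _).symm⟩
  have h := add_mem_add (add_mem_add (add_mem_add (mem_singleton xb) h0) h0')
    (show (0 : Fin n → ℝ) ∈ recc C from (reccCone C).zero_mem)
  rwa [add_zero, add_zero, add_zero] at h

open scoped Classical

/-- The convention `x/(+∞) := 0` is realized by `EReal.toReal ⊤ = 0` and `x / 0 = 0`. -/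
theorem stmt17_general (xb : Fin n → ℝ) (r : ι → Fin n → ℝ) (C : Set (Fin n → ℝ))
    (k : ι) (hk : k ∈ N2set xb r C)
    (S : Finset ι) (hS : (S : Set ι) ⊆ M'set xb r C k)
    (c : ι → ℝ) (hc : ∀ j, 0 ≤ c j)
    (hx : xb + ∑ j, c j • r j ∉ SkCset xb r C k) :
    ∑ i ∈ S, c i
      - ∑ j ∈ Finset.univ.filter (fun j => j ∉ Jset xb r C k),
          c j / (eps' xb r C k S j).toReal ≤ 0 := by
  rcases S.eq_empty_or_nonempty with rfl | hSne
  · simp [eps']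
  by_contra! hlt
  set N := Finset.univ.filter fun j => j ∉ Jset xb r C k
  have hNJ : ∀ {j}, j ∈ N → j ∉ Jset xb r C k := fun hj => (Finset.mem_filter.mp hj).2
  obtain ⟨b, hb, hbT⟩ := Finset.exists_coe_lt_sum_div_lt c
    (fun j hj => eps'_pos hS hSne (hNJ hj)) (sub_pos.mp hlt)
  have hmem : ∑ j, c j • r j ∈ reccCone (SkCset xb r C k) := by
    refine PointedCone.sum_smul_mem_of_sum_div_lt hc
      (Finset.disjoint_left.mpr fun i hi hiN => hNJ hiN (hS hi).1)
      (fun j hj => not_not.mp fun h => hj (Finset.mem_filter.mpr ⟨Finset.mem_univ j, h⟩))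
      (fun j hj => (hb j hj).1) (fun i hi j hj => ?_) hbT
    exact PointedCone.add_smul_mem_of_lt_sSup (hS hi).1 (hb j hj).1.le
      ((hb j hj).2.trans_le (sInf_le ⟨i, hi, rfl⟩))
  exact hx (by simpa using hmem xb (self_mem_SkCset hk) 1 zero_le_one)

/-- Theorem 6. For `S ⊆ M'`, every point `x = x̄ + Σ_j x_j r^j` of
`P^B ∖ S_k^C` satisfies `Σ_{i∈S} x_i − Σ_{j∈N∖J} x_j/ε'_j(S) ≤ 0`
(convention `x/(+∞) := 0`, realized via `EReal.toReal ⊤ = 0` and `x/0 = 0`). -/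
theorem stmt17 (xb : Fin n → ℝ) (r : ι → Fin n → ℝ) (hr : LinearIndependent ℝ r)
    (C : Set (Fin n → ℝ)) (hCopen : IsOpen C) (hCconv : Convex ℝ C)
    (hxb : xb ∉ closure C) (hrecc : recc C ⊆ reccPBset r)
    (k : ι) (hk : k ∈ N2set xb r C)
    (S : Finset ι) (hS : (S : Set ι) ⊆ M'set xb r C k)
    (c : ι → ℝ) (hc : ∀ j, 0 ≤ c j)
    (hx : xb + ∑ j, c j • r j ∉ SkCset xb r C k) :
    ∑ i ∈ S, c i
      - ∑ j ∈ Finset.univ.filter (fun j => j ∉ Jset xb r C k),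
          c j / (eps' xb r C k S j).toReal ≤ 0 :=
  stmt17_general xb r C k hk S hS c hc hx
end
end
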